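/- Let p < q be prime numbers and let b, c be natural numbers satisfying p²·q = q + b·p² + c·q². Then p = 2, q = 3, b = 0, and c = 1. -/

import Mathlib

/-!
Reducing the relation modulo `q` gives `q ∣ b * p ^ 2`, hence `q ∣ b`; since `b * p ^ 2 < q * p ^ 2`
this forces `b = 0`, and cancelling `q` leaves `p ^ 2 = 1 + c * q`. So the prime `q > p` divides
`(p + 1) * (p - 1)`, hence `q = p + 1`, and the only consecutive primes are `2` and `3`.
-/

namespace Nat

theorem Prime.eq_two_of_prime_add_one {p : ℕ} (hp : p.Prime) (hp' : (p + 1).Prime) : p = 2 := by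
  rcases hp.eq_two_or_odd' with h2 | hodd
  · exact h2
  · have : p + 1 = 2 := hp'.even_iff.mp hodd.add_one
    exact absurd (by omega) hp.ne_one

theorem Prime.eq_add_one_of_dvd_sq_sub_one {p q : ℕ} (hq : q.Prime) (hp : 2 ≤ p) (hpq : p < q)
    (h : q ∣ p ^ 2 - 1) : q = p + 1 := by
  rw [← one_pow 2, Nat.sq_sub_sq] at h
  rcases hq.dvd_mul.mp h with hdvd | hdvd
  · have := Nat.le_of_dvd (by omega) hdvd
    omega
  · have := Nat.le_of_dvd (by omega) hdvd
    omega

theorem eq_zero_of_sq_mul_eq {p q b c : ℕ} (hq : 0 < q) (hqp : q.Coprime p)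
    (h : p ^ 2 * q = q + b * p ^ 2 + c * q ^ 2) : b = 0 := by
  have hdvd : q ∣ b * p ^ 2 := by
    have : q ∣ q * (1 + c * q) + b * p ^ 2 := ⟨p ^ 2, by rw [mul_comm q (p ^ 2), h]; ring⟩
    exact (Nat.dvd_add_right (dvd_mul_right q _)).mp this
  have hqb : q ∣ b := (hqp.pow_right 2).dvd_of_dvd_mul_right hdvd
  have hbq : b < q := by
    by_contra! hle
    nlinarith [Nat.mul_le_mul_right (p ^ 2) hle]
  exact Nat.eq_zero_of_dvd_of_lt hqb hbq

end Nat

theorem stmt_7 (p q : ℕ) (hp : p.Prime) (hq : q.Prime) (hpq : p < q)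
    (b c : ℕ) (h : p ^ 2 * q = q + b * p ^ 2 + c * q ^ 2) :
    p = 2 ∧ q = 3 ∧ b = 0 ∧ c = 1 := by
  obtain rfl : b = 0 :=
    Nat.eq_zero_of_sq_mul_eq hq.pos ((Nat.coprime_primes hq hp).mpr hpq.ne') h
  have hpc : p ^ 2 = 1 + c * q :=
    Nat.eq_of_mul_eq_mul_left hq.pos (by linear_combination h)
  obtain rfl : q = p + 1 :=
    hq.eq_add_one_of_dvd_sq_sub_one hp.two_le hpq ⟨c, by rw [hpc, Nat.add_sub_cancel_left, mul_comm]⟩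
  obtain rfl : p = 2 := hp.eq_two_of_prime_add_one hq
  omega
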